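/- Let 0 < α < n, 1 < q ≤ p < ∞, 1 < t ≤ s < ∞ with 1/s = 1/p − α/n and t/s = q/p, let ε ∈ E and f ∈ M^p_q. Then one has the pointwise estimate Σ_{j=−∞}^{∞} | Σ_{Q∈𝒟_j} |Q|^{α/n} ⟨f,h^ε_Q⟩ h^ε_Q(x) | ≤ C ‖f‖_{M^p_q}^{1−p/s} · ( sup_{l∈ℤ} | Σ_{Q∈𝒟_l} ⟨f,h^ε_Q⟩ h^ε_Q(x) | )^{p/s} for every x ∈ ℝⁿ, with C depending only on n, p, q, s, t, α. -/

import Mathlib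

open MeasureTheory Filter Topology ENNReal NNReal

noncomputable section

/-- The dyadic cube `Q_{j,m} = ∏_{i} [mᵢ/2ʲ, (mᵢ+1)/2ʲ)` in `ℝⁿ`. -/
def dyadicCube (n : ℕ) (j : ℤ) (m : Fin n → ℤ) : Set (Fin n → ℝ) :=
  {x | ∀ i, (m i : ℝ) / 2 ^ j ≤ x i ∧ x i < ((m i : ℝ) + 1) / 2 ^ j}

/-- The one-dimensional generating Haar pattern
`h^{εᵢ}(t) = χ_{[0,1)}(2t) + (−1)^{εᵢ} χ_{[1,2)}(2t)`. -/
def haarBase1 (e : ZMod 2) (t : ℝ) : ℝ :=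
  Set.indicator (Set.Ico (0 : ℝ) 1) (fun _ => (1 : ℝ)) (2 * t)
    + (-1 : ℝ) ^ e.val * Set.indicator (Set.Ico (1 : ℝ) 2) (fun _ => (1 : ℝ)) (2 * t)

/-- `h^ε = h^{ε₁} ⊗ ⋯ ⊗ h^{εₙ}`. -/
def haarBase {n : ℕ} (ε : Fin n → ZMod 2) (x : Fin n → ℝ) : ℝ :=
  ∏ i, haarBase1 (ε i) (x i)

/-- The Haar function `h^ε_Q(x) = 2^{jn/2} h^ε(2ʲx − m)` adapted to `Q_{j,m}`. -/
def haarFn {n : ℕ} (ε : Fin n → ZMod 2) (j : ℤ) (m : Fin n → ℤ) (x : Fin n → ℝ) : ℝ :=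
  (2 : ℝ) ^ (((j : ℝ) * (n : ℝ)) / 2) * haarBase ε (fun i => (2 : ℝ) ^ j * x i - (m i : ℝ))

/-- The set `E = (ℤ/2ℤ)ⁿ \ {0}` of nontrivial sign patterns. -/
def haarSigns (n : ℕ) : Finset (Fin n → ZMod 2) :=
  Finset.univ.erase 0

/-- The Haar coefficient `⟨f, h^ε_Q⟩ = ∫ f h^ε_Q`. -/
def haarCoeff {n : ℕ} (f : (Fin n → ℝ) → ℝ) (ε : Fin n → ZMod 2) (j : ℤ) (m : Fin n → ℤ) : ℝ :=
  ∫ x, f x * haarFn ε j m x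

/-- `Σ_{Q ∈ 𝒟_j} ⟨f,h^ε_Q⟩ h^ε_Q(x)`. -/
def haarLayer {n : ℕ} (f : (Fin n → ℝ) → ℝ) (ε : Fin n → ZMod 2) (j : ℤ) (x : Fin n → ℝ) : ℝ :=
  ∑' m : Fin n → ℤ, haarCoeff f ε j m * haarFn ε j m x

/-- The Haar square function `( Σ_j | Σ_{Q ∈ 𝒟_j} ⟨f,h^ε_Q⟩ h^ε_Q |² )^{1/2}`. -/
def haarSquareFn {n : ℕ} (f : (Fin n → ℝ) → ℝ) (ε : Fin n → ZMod 2) (x : Fin n → ℝ) : ℝ :=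
  Real.sqrt (∑' j : ℤ, (haarLayer f ε j x) ^ 2)

/-- The (dyadic) Morrey norm `‖f‖_{M^p_q} = sup_{Q ∈ 𝒟} |Q|^{1/p−1/q} (∫_Q |f|^q)^{1/q}`. -/
def morreyNorm {n : ℕ} (p q : ℝ) (f : (Fin n → ℝ) → ℝ) : ℝ≥0∞ :=
  ⨆ (j : ℤ) (m : Fin n → ℤ),
    volume (dyadicCube n j m) ^ (1 / p - 1 / q) *
      (∫⁻ x in dyadicCube n j m, ((‖f x‖₊ : ℝ≥0∞)) ^ q) ^ (1 / q)

/-- Membership in the Morrey space `M^p_q`. -/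
def MemMorrey {n : ℕ} (p q : ℝ) (f : (Fin n → ℝ) → ℝ) : Prop :=
  AEStronglyMeasurable f volume ∧ morreyNorm p q f ≠ ⊤

/-- The average `m_Q(f) = |Q|⁻¹ ∫_Q f` over the dyadic cube `Q_{j,m}`. -/
def cubeAvg {n : ℕ} (j : ℤ) (m : Fin n → ℤ) (f : (Fin n → ℝ) → ℝ) : ℝ :=
  (volume (dyadicCube n j m)).toReal⁻¹ * ∫ x in dyadicCube n j m, f x

/-- The dyadic BMO norm `sup_{Q ∈ 𝒟} m_Q(|a − m_Q(a)|)`. -/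
def bmoNormD {n : ℕ} (a : (Fin n → ℝ) → ℝ) : ℝ≥0∞ :=
  ⨆ (j : ℤ) (m : Fin n → ℤ),
    ENNReal.ofReal (cubeAvg j m (fun x => |a x - cubeAvg j m a|))

/-- `Σ_{Q ∈ 𝒟_j} |Q|^{α/n} ⟨f,h^ε_Q⟩ h^ε_Q(x)`. -/
def weightedLayer {n : ℕ} (α : ℝ) (f : (Fin n → ℝ) → ℝ) (ε : Fin n → ZMod 2) (j : ℤ)
    (x : Fin n → ℝ) : ℝ :=
  ∑' m : Fin n → ℤ,
    (volume (dyadicCube n j m)).toReal ^ (α / (n : ℝ)) * (haarCoeff f ε j m * haarFn ε j m x)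

/-- The symmetric partial sum `Σ_{ε∈E} Σ_{j=−M}^{M} Σ_{Q∈𝒟_j} |Q|^{α/n} ⟨f,h^ε_Q⟩ h^ε_Q(x)`. -/
def dyadicIalphaPartial {n : ℕ} (α : ℝ) (f : (Fin n → ℝ) → ℝ) (M : ℕ) (x : Fin n → ℝ) : ℝ :=
  ∑ ε ∈ haarSigns n, ∑ j ∈ Finset.Icc (-(M : ℤ)) (M : ℤ), weightedLayer α f ε j x

/-- The dyadic fractional integral operator `I_{α,dyadic}`, as the limit of `dyadicIalphaPartial`. -/
def dyadicIalpha {n : ℕ} (α : ℝ) (f : (Fin n → ℝ) → ℝ) (x : Fin n → ℝ) : ℝ :=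
  limUnder atTop (fun M : ℕ => dyadicIalphaPartial α f M x)

/-- The commutator `[a, I_{α,dyadic}]f = a · I_{α,dyadic}f − I_{α,dyadic}(a f)`. -/
def dyadicComm {n : ℕ} (α : ℝ) (a f : (Fin n → ℝ) → ℝ) (x : Fin n → ℝ) : ℝ :=
  a x * dyadicIalpha α f x - dyadicIalpha α (fun y => a y * f y) x

/-- Symmetric partial sums of the Haar expansion of `f`. -/
def haarPartial {n : ℕ} (f : (Fin n → ℝ) → ℝ) (M : ℕ) (x : Fin n → ℝ) : ℝ :=
  ∑ ε ∈ haarSigns n, ∑ j ∈ Finset.Icc (-(M : ℤ)) (M : ℤ), haarLayer f ε j x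

/-- Convergence in `L^q` on every compact subset of `ℝⁿ`. -/
def TendstoLqLoc {n : ℕ} (q : ℝ) (F : ℕ → (Fin n → ℝ) → ℝ) (g : (Fin n → ℝ) → ℝ) : Prop :=
  ∀ K : Set (Fin n → ℝ), IsCompact K →
    Tendsto (fun M => eLpNorm (fun x => F M x - g x) (ENNReal.ofReal q) (volume.restrict K))
      atTop (𝓝 0)

/-- The dyadic paraproduct `Σ_j Σ_{Q∈𝒟_j} ⟨f,χ_Q⟩ ⟨a,h^ε_Q⟩ h^ε_Q(x)/|Q|`. -/
def paraproduct {n : ℕ} (a f : (Fin n → ℝ) → ℝ) (ε : Fin n → ZMod 2) (x : Fin n → ℝ) : ℝ :=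
  ∑' (j : ℤ) (m : Fin n → ℤ),
    (∫ y in dyadicCube n j m, f y) * haarCoeff a ε j m * haarFn ε j m x
      / (volume (dyadicCube n j m)).toReal

/-- A `(p,q)`-block: an `L^q` function supported on a dyadic cube `Q` with
`‖A‖_{L^q} ≤ |Q|^{1/q−1/p}`. -/
def IsBlock {n : ℕ} (p q : ℝ) (A : (Fin n → ℝ) → ℝ) : Prop :=
  MemLp A (ENNReal.ofReal q) volume ∧
    ∃ (j : ℤ) (m : Fin n → ℤ), (∀ x ∉ dyadicCube n j m, A x = 0) ∧
      eLpNorm A (ENNReal.ofReal q) volume ≤ volume (dyadicCube n j m) ^ (1 / q - 1 / p)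

/-- The block space (predual Morrey) norm `‖f‖_{H^p_q}`: infimum of `Σ|λⱼ|` over decompositions
`f = Σ λⱼ aⱼ` into `(p,q)`-blocks. It equals `⊤` iff no decomposition exists. -/
def blockNorm {n : ℕ} (p q : ℝ) (f : (Fin n → ℝ) → ℝ) : ℝ≥0∞ :=
  ⨅ d : {d : (ℕ → ℝ) × (ℕ → (Fin n → ℝ) → ℝ) //
      (∀ i, IsBlock p q (d.2 i)) ∧ Summable (fun i => |d.1 i|) ∧
        ∀ᵐ x ∂volume, f x = ∑' i, d.1 i * d.2 i x},
    ENNReal.ofReal (∑' i, |(d : (ℕ → ℝ) × (ℕ → (Fin n → ℝ) → ℝ)).1 i|)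

/-- Membership in the span of Haar functions. -/
def InHaarSpan {n : ℕ} (b : (Fin n → ℝ) → ℝ) : Prop :=
  ∃ (s : Finset ((Fin n → ZMod 2) × ℤ × (Fin n → ℤ)))
    (c : (Fin n → ZMod 2) × ℤ × (Fin n → ℤ) → ℝ),
      (∀ u ∈ s, u.1 ≠ 0) ∧ ∀ x, b x = ∑ u ∈ s, c u * haarFn u.1 u.2.1 u.2.2 x

/-- `VMO_dyadic`: the closure in the dyadic BMO norm of the span of Haar functions. -/
def InVMOD {n : ℕ} (a : (Fin n → ℝ) → ℝ) : Prop :=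
  ∀ δ : ℝ, 0 < δ → ∃ b : (Fin n → ℝ) → ℝ, InHaarSpan b ∧
    bmoNormD (fun x => a x - b x) ≤ ENNReal.ofReal δ

/-- Euclidean distance on `Fin n → ℝ`. -/
def eucDist {n : ℕ} (x y : Fin n → ℝ) : ℝ :=
  Real.sqrt (∑ i, (x i - y i) ^ 2)

/-- The Riesz fractional integral `I_α f(x) = ∫ f(y)/|x−y|^{n−α} dy`. -/
def rieszPotential {n : ℕ} (α : ℝ) (f : (Fin n → ℝ) → ℝ) (x : Fin n → ℝ) : ℝ :=
  ∫ y, f y / eucDist x y ^ ((n : ℝ) - α)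

/-- A (half-open) cube in `ℝⁿ` with corner `c` and side length `l`. -/
def genCube {n : ℕ} (c : Fin n → ℝ) (l : ℝ) : Set (Fin n → ℝ) :=
  {x | ∀ i, c i ≤ x i ∧ x i < c i + l}

/-- Average over a general cube. -/
def genAvg {n : ℕ} (c : Fin n → ℝ) (l : ℝ) (f : (Fin n → ℝ) → ℝ) : ℝ :=
  (volume (genCube c l)).toReal⁻¹ * ∫ x in genCube c l, f x

/-- The (non-dyadic) BMO norm: supremum over all cubes of `m_Q(|a − m_Q(a)|)`. -/
def bmoNormFull {n : ℕ} (a : (Fin n → ℝ) → ℝ) : ℝ≥0∞ :=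
  ⨆ (c : Fin n → ℝ) (l : ℝ) (_ : 0 < l),
    ENNReal.ofReal (genAvg c l (fun x => |a x - genAvg c l a|))


/-- The truncated Haar square function `( Σ_{j≥k} | Σ_{Q∈𝒟_j} ⟨f,h^ε_Q⟩ h^ε_Q |² )^{1/2}`. -/
def haarSquareFnFrom {n : ℕ} (k : ℤ) (f : (Fin n → ℝ) → ℝ) (ε : Fin n → ZMod 2)
    (x : Fin n → ℝ) : ℝ :=
  Real.sqrt (∑' j : {j : ℤ // k ≤ j}, (haarLayer f ε j.1 x) ^ 2)

/-- `Σ_{Q ∈ 𝒟_k} ⟨f,χ_Q⟩ χ_Q(x)/|Q|`. -/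
def avgLayer {n : ℕ} (k : ℤ) (f : (Fin n → ℝ) → ℝ) (x : Fin n → ℝ) : ℝ :=
  ∑' m : Fin n → ℤ,
    (∫ y in dyadicCube n k m, f y) * Set.indicator (dyadicCube n k m) (fun _ => (1 : ℝ)) x
      / (volume (dyadicCube n k m)).toReal

/-- `Σ_{Q ∈ 𝒟_j, Q ⊆ R} ⟨f,h^ε_Q⟩ h^ε_Q(x)` where `R = Q_{k,m₀}`. -/
def haarLayerIn {n : ℕ} (f : (Fin n → ℝ) → ℝ) (ε : Fin n → ZMod 2) (k : ℤ) (m₀ : Fin n → ℤ)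
    (j : ℤ) (x : Fin n → ℝ) : ℝ :=
  ∑' m : {m : Fin n → ℤ // dyadicCube n j m ⊆ dyadicCube n k m₀},
    haarCoeff f ε j m.1 * haarFn ε j m.1 x

/-- The localized square function
`( Σ_{j ≥ −log₂ℓ(R)} | Σ_{Q∈𝒟_j, Q⊆R} ⟨f,h^ε_Q⟩ h^ε_Q |² )^{1/2}` for `R = Q_{k,m₀}`. -/
def haarSquareFnIn {n : ℕ} (f : (Fin n → ℝ) → ℝ) (ε : Fin n → ZMod 2) (k : ℤ) (m₀ : Fin n → ℤ)
    (x : Fin n → ℝ) : ℝ :=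
  Real.sqrt (∑' j : {j : ℤ // k ≤ j}, (haarLayerIn f ε k m₀ j.1 x) ^ 2)

/-- The square function `( Σ_j | Σ_{Q∈𝒟_j, Q ⊇ R} ⟨f,h^ε_Q⟩ h^ε_Q |² )^{1/2}` over cubes
containing `R = Q_{k,m₀}`. -/
def haarSquareFnUp {n : ℕ} (f : (Fin n → ℝ) → ℝ) (ε : Fin n → ZMod 2) (k : ℤ) (m₀ : Fin n → ℤ)
    (x : Fin n → ℝ) : ℝ :=
  Real.sqrt (∑' j : ℤ,
    (∑' m : {m : Fin n → ℤ // dyadicCube n k m₀ ⊆ dyadicCube n j m},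
      haarCoeff f ε j m.1 * haarFn ε j m.1 x) ^ 2)

/-! Each layer `Σ_{Q∈𝒟_j} ⟨f,h^ε_Q⟩ h^ε_Q(x)` has a single nonzero term, the one for the cube of
generation `j` containing `x`, and Hölder's inequality on that cube bounds it by
`2^{jn/p} ‖f‖_{M^p_q}`. Since `α + n/s = n/p`, the `j`-th weighted layer is thus at most
`min (2^{-jα} S) (2^{jn/s} ‖f‖_{M^p_q})`, where `S` is the supremum of the unweighted layers.
Summing the two geometric series on either side of the index where these bounds balance gives
`C ‖f‖^{α/(α+n/s)} S^{(n/s)/(α+n/s)} = C ‖f‖^{1-p/s} S^{p/s}`. -/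

def twoSidedGeomConst (a b : ℝ) : ℝ := (1 - (2 : ℝ) ^ (-a))⁻¹ + (1 - (2 : ℝ) ^ (-b))⁻¹

lemma rpow_two_neg_lt_one {a : ℝ} (ha : 0 < a) : (2 : ℝ) ^ (-a) < 1 :=
  Real.rpow_lt_one_of_one_lt_of_neg one_lt_two (neg_neg_of_pos ha)

lemma twoSidedGeomConst_pos {a b : ℝ} (ha : 0 < a) (hb : 0 < b) : 0 < twoSidedGeomConst a b :=
  add_pos (inv_pos.2 (sub_pos.2 (rpow_two_neg_lt_one ha)))
    (inv_pos.2 (sub_pos.2 (rpow_two_neg_lt_one hb)))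

lemma rpow_two_le_mul_pow {x y c : ℝ} {k : ℕ} (h : x ≤ y - c * k) :
    (2 : ℝ) ^ x ≤ 2 ^ y * ((2 : ℝ) ^ (-c)) ^ k := by
  rw [← Real.rpow_natCast, ← Real.rpow_mul zero_le_two, ← Real.rpow_add two_pos]
  exact Real.rpow_le_rpow_of_exponent_le one_le_two (by linarith)

lemma tsum_int_le_of_geometric_tails {u : ℤ → ℝ≥0∞} (j₀ : ℤ) {K r r' : ℝ} (hK : 0 ≤ K)
    (hr : 0 ≤ r) (hr1 : r < 1) (hr' : 0 ≤ r') (hr'1 : r' < 1)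
    (hup : ∀ k : ℕ, u (j₀ + k) ≤ ENNReal.ofReal (K * r ^ k))
    (hdown : ∀ k : ℕ, u (j₀ - 1 - k) ≤ ENNReal.ofReal (K * r' ^ k)) :
    ∑' j, u j ≤ ENNReal.ofReal (K * ((1 - r)⁻¹ + (1 - r')⁻¹)) := by
  have geom : ∀ {ρ : ℝ}, 0 ≤ ρ → ρ < 1 →
      ∑' k : ℕ, ENNReal.ofReal (K * ρ ^ k) = ENNReal.ofReal (K * (1 - ρ)⁻¹) := by
    intro ρ hρ hρ1
    simp_rw [ENNReal.ofReal_mul hK, ENNReal.ofReal_pow hρ, ENNReal.tsum_mul_left,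
      ENNReal.tsum_geometric, ← ENNReal.ofReal_one, ← ENNReal.ofReal_sub _ hρ,
      ENNReal.ofReal_inv_of_pos (sub_pos.2 hρ1)]
  calc ∑' j, u j = ∑' k : ℕ, u (j₀ + k) + ∑' k : ℕ, u (j₀ - 1 - k) := by
        rw [← (Equiv.addLeft j₀).tsum_eq,
          tsum_of_nat_of_neg_add_one ENNReal.summable ENNReal.summable]
        congr 2 with k
        simp only [Equiv.coe_addLeft]
        congr 1; ring
    _ ≤ ENNReal.ofReal (K * (1 - r)⁻¹) + ENNReal.ofReal (K * (1 - r')⁻¹) := by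
        rw [← geom hr hr1, ← geom hr' hr'1]
        exact add_le_add (ENNReal.tsum_le_tsum hup) (ENNReal.tsum_le_tsum hdown)
    _ = ENNReal.ofReal (K * ((1 - r)⁻¹ + (1 - r')⁻¹)) := by
        rw [mul_add, ENNReal.ofReal_add (mul_nonneg hK (inv_nonneg.2 (sub_nonneg.2 hr1.le)))
          (mul_nonneg hK (inv_nonneg.2 (sub_nonneg.2 hr'1.le)))]

lemma exists_rpow_two_balance {a b S M : ℝ} (ha : 0 < a) (hb : 0 < b) (hS : 0 < S) (hM : 0 < M) :
    ∃ θ : ℝ, (2 : ℝ) ^ (-θ * a) * S = M ^ (a / (a + b)) * S ^ (b / (a + b)) ∧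
      (2 : ℝ) ^ (θ * b) * M = M ^ (a / (a + b)) * S ^ (b / (a + b)) := by
  obtain ⟨σ, rfl⟩ : ∃ σ, (2 : ℝ) ^ σ = S := ⟨_, Real.rpow_logb two_pos (by norm_num) hS⟩
  obtain ⟨μ, rfl⟩ : ∃ μ, (2 : ℝ) ^ μ = M := ⟨_, Real.rpow_logb two_pos (by norm_num) hM⟩
  refine ⟨(σ - μ) / (a + b), ?_, ?_⟩ <;>
  · simp only [← Real.rpow_mul zero_le_two, ← Real.rpow_add two_pos]
    congr 1
    field_simp
    ring

lemma tsum_le_of_two_sided_geometric_bound_of_pos {a b S M : ℝ} (ha : 0 < a) (hb : 0 < b)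
    (hS : 0 < S) (hM : 0 < M) {u : ℤ → ℝ≥0∞}
    (hdecay : ∀ j : ℤ, u j ≤ ENNReal.ofReal ((2 : ℝ) ^ (-(j : ℝ) * a) * S))
    (hgrowth : ∀ j : ℤ, u j ≤ ENNReal.ofReal ((2 : ℝ) ^ ((j : ℝ) * b) * M)) :
    ∑' j, u j ≤
      ENNReal.ofReal (twoSidedGeomConst a b * (M ^ (a / (a + b)) * S ^ (b / (a + b)))) := by
  obtain ⟨θ, hθa, hθb⟩ := exists_rpow_two_balance ha hb hS hM
  rw [← hθa] at hθb
  rw [← hθa, twoSidedGeomConst, mul_comm]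
  apply tsum_int_le_of_geometric_tails ⌈θ⌉ (by positivity) (by positivity)
    (rpow_two_neg_lt_one ha) (by positivity) (rpow_two_neg_lt_one hb)
  · intro k
    refine (hdecay _).trans (ENNReal.ofReal_le_ofReal ?_)
    rw [mul_right_comm]
    gcongr
    apply rpow_two_le_mul_pow
    push_cast
    nlinarith [Int.le_ceil θ]
  · intro k
    refine (hgrowth _).trans (ENNReal.ofReal_le_ofReal ?_)
    rw [← hθb, mul_right_comm]
    gcongr
    apply rpow_two_le_mul_pow
    push_cast
    nlinarith [Int.ceil_lt_add_one θ]

lemma tsum_le_of_two_sided_geometric_bound {a b : ℝ} (ha : 0 < a) (hb : 0 < b) {S M : ℝ≥0∞}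
    {u : ℤ → ℝ≥0∞}
    (hdecay : ∀ j : ℤ, u j ≤ ENNReal.ofReal ((2 : ℝ) ^ (-(j : ℝ) * a)) * S)
    (hgrowth : ∀ j : ℤ, u j ≤ ENNReal.ofReal ((2 : ℝ) ^ ((j : ℝ) * b)) * M) :
    ∑' j, u j ≤ ENNReal.ofReal (twoSidedGeomConst a b) * M ^ (a / (a + b)) * S ^ (b / (a + b)) := by
  have hab : 0 < a + b := add_pos ha hb
  rcases eq_or_ne S 0 with rfl | hS0
  · simp [fun j => le_zero_iff.1 ((hdecay j).trans_eq (mul_zero _))]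
  rcases eq_or_ne M 0 with rfl | hM0
  · simp [fun j => le_zero_iff.1 ((hgrowth j).trans_eq (mul_zero _))]
  have hC : ENNReal.ofReal (twoSidedGeomConst a b) ≠ 0 := by
    simpa using twoSidedGeomConst_pos ha hb
  have hMpow : M ^ (a / (a + b)) ≠ 0 := by simp [hM0, (div_pos ha hab).le, ENNReal.rpow_eq_zero_iff]
  have hSpow : S ^ (b / (a + b)) ≠ 0 := by simp [hS0, (div_pos hb hab).le, ENNReal.rpow_eq_zero_iff]
  rcases eq_or_ne M ⊤ with rfl | hMtop
  · simp [ENNReal.top_rpow_of_pos (div_pos ha hab), ENNReal.mul_top hC, ENNReal.top_mul hSpow]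
  rcases eq_or_ne S ⊤ with rfl | hStop
  · simp [ENNReal.top_rpow_of_pos (div_pos hb hab), ENNReal.mul_top (mul_ne_zero hC hMpow)]
  obtain ⟨s, hs, rfl⟩ : ∃ s : ℝ, 0 < s ∧ S = ENNReal.ofReal s :=
    ⟨S.toReal, ENNReal.toReal_pos hS0 hStop, (ENNReal.ofReal_toReal hStop).symm⟩
  obtain ⟨m, hm, rfl⟩ : ∃ m : ℝ, 0 < m ∧ M = ENNReal.ofReal m :=
    ⟨M.toReal, ENNReal.toReal_pos hM0 hMtop, (ENNReal.ofReal_toReal hMtop).symm⟩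
  simp only [← ENNReal.ofReal_mul (Real.rpow_nonneg zero_le_two _)] at hdecay hgrowth
  rw [ENNReal.ofReal_rpow_of_pos hm, ENNReal.ofReal_rpow_of_pos hs, mul_assoc,
    ← ENNReal.ofReal_mul (by positivity), ← ENNReal.ofReal_mul (twoSidedGeomConst_pos ha hb).le]
  exact tsum_le_of_two_sided_geometric_bound_of_pos ha hb hs hm hdecay hgrowth

section Haar

variable {n : ℕ}

lemma dyadicCube_eq_pi (j : ℤ) (m : Fin n → ℤ) :
    dyadicCube n j m = Set.univ.pi fun i => Set.Ico ((m i : ℝ) / 2 ^ j) ((m i + 1) / 2 ^ j) := by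
  ext x
  simp [dyadicCube]

lemma measurableSet_dyadicCube (j : ℤ) (m : Fin n → ℤ) : MeasurableSet (dyadicCube n j m) := by
  rw [dyadicCube_eq_pi]
  exact .univ_pi fun _ => measurableSet_Ico

lemma volume_dyadicCube (j : ℤ) (m : Fin n → ℤ) :
    volume (dyadicCube n j m) = ENNReal.ofReal ((2 : ℝ) ^ (-(j : ℝ) * n)) := by
  have side : ∀ i, ((m i : ℝ) + 1) / 2 ^ j - m i / 2 ^ j = (2 : ℝ) ^ (-(j : ℝ)) := by
    intro i
    rw [div_sub_div_same, add_sub_cancel_left, Real.rpow_neg zero_le_two, Real.rpow_intCast,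
      one_div]
  simp only [dyadicCube_eq_pi, volume_pi_pi, Real.volume_Ico, side, Finset.prod_const,
    Finset.card_univ, Fintype.card_fin]
  rw [← ENNReal.ofReal_pow (by positivity), ← Real.rpow_natCast, ← Real.rpow_mul zero_le_two]

lemma haarBase1_eq_zero {e : ZMod 2} {t : ℝ} (ht : t ∉ Set.Ico (0 : ℝ) 1) : haarBase1 e t = 0 := by
  have h₁ : 2 * t ∉ Set.Ico (0 : ℝ) 1 := fun h => ht ⟨by linarith [h.1], by linarith [h.2]⟩
  have h₂ : 2 * t ∉ Set.Ico (1 : ℝ) 2 := fun h => ht ⟨by linarith [h.1], by linarith [h.2]⟩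
  simp [haarBase1, Set.indicator_of_notMem h₁, Set.indicator_of_notMem h₂]

lemma abs_haarBase1_le (e : ZMod 2) (t : ℝ) : |haarBase1 e t| ≤ 1 := by
  simp only [haarBase1, Set.indicator_apply, Set.mem_Ico]
  split_ifs <;> first | linarith | simp

lemma abs_haarFn_le (ε : Fin n → ZMod 2) (j : ℤ) (m : Fin n → ℤ) (x : Fin n → ℝ) :
    |haarFn ε j m x| ≤ (2 : ℝ) ^ ((j : ℝ) * n / 2) := by
  rw [haarFn, haarBase, abs_mul, Finset.abs_prod, abs_of_pos (by positivity)]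
  exact mul_le_of_le_one_right (by positivity)
    (Finset.prod_le_one (fun _ _ => abs_nonneg _) fun _ _ => abs_haarBase1_le _ _)

lemma mem_dyadicCube_of_haarFn_ne_zero {ε : Fin n → ZMod 2} {j : ℤ} {m : Fin n → ℤ}
    {x : Fin n → ℝ} (h : haarFn ε j m x ≠ 0) : x ∈ dyadicCube n j m := by
  intro i
  have hi : (2 : ℝ) ^ j * x i - m i ∈ Set.Ico (0 : ℝ) 1 := by
    by_contra hi
    apply h
    rw [haarFn, haarBase, Finset.prod_eq_zero (Finset.mem_univ i) (haarBase1_eq_zero hi), mul_zero]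
  have h2j : (0 : ℝ) < 2 ^ j := by positivity
  rw [div_le_iff₀ h2j, lt_div_iff₀ h2j]
  constructor <;> linarith [hi.1, hi.2, mul_comm ((2 : ℝ) ^ j) (x i)]

lemma eq_floor_of_mem_dyadicCube {j : ℤ} {m : Fin n → ℤ} {x : Fin n → ℝ}
    (h : x ∈ dyadicCube n j m) : m = fun i => ⌊(2 : ℝ) ^ j * x i⌋ := by
  funext i
  have h2j : (0 : ℝ) < 2 ^ j := by positivity
  obtain ⟨h₁, h₂⟩ := h i
  rw [div_le_iff₀ h2j] at h₁
  rw [lt_div_iff₀ h2j] at h₂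
  rw [eq_comm, Int.floor_eq_iff]
  constructor <;> linarith [mul_comm ((2 : ℝ) ^ j) (x i)]

lemma haarLayer_eq (f : (Fin n → ℝ) → ℝ) (ε : Fin n → ZMod 2) (j : ℤ) (x : Fin n → ℝ) :
    haarLayer f ε j x =
      haarCoeff f ε j (fun i => ⌊(2 : ℝ) ^ j * x i⌋) *
        haarFn ε j (fun i => ⌊(2 : ℝ) ^ j * x i⌋) x :=
  tsum_eq_single _ fun m hm => by
    by_contra h
    exact hm <| eq_floor_of_mem_dyadicCube <|
      mem_dyadicCube_of_haarFn_ne_zero (right_ne_zero_of_mul h)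

lemma weightedLayer_eq (hn : n ≠ 0) (α : ℝ) (f : (Fin n → ℝ) → ℝ) (ε : Fin n → ZMod 2) (j : ℤ)
    (x : Fin n → ℝ) : weightedLayer α f ε j x = (2 : ℝ) ^ (-(j : ℝ) * α) * haarLayer f ε j x := by
  have hvol : ∀ m : Fin n → ℤ,
      (volume (dyadicCube n j m)).toReal ^ (α / n) = (2 : ℝ) ^ (-(j : ℝ) * α) := by
    intro m
    rw [volume_dyadicCube, ENNReal.toReal_ofReal (by positivity), ← Real.rpow_mul zero_le_two]
    congr 1
    field_simp
  simp only [weightedLayer, haarLayer, hvol]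
  exact tsum_mul_left

lemma ofReal_abs_weightedLayer_eq (hn : n ≠ 0) (α : ℝ) (f : (Fin n → ℝ) → ℝ)
    (ε : Fin n → ZMod 2) (j : ℤ) (x : Fin n → ℝ) :
    ENNReal.ofReal |weightedLayer α f ε j x| =
      ENNReal.ofReal ((2 : ℝ) ^ (-(j : ℝ) * α)) * ENNReal.ofReal |haarLayer f ε j x| := by
  rw [weightedLayer_eq hn, abs_mul, abs_of_pos (by positivity), ENNReal.ofReal_mul (by positivity)]

end Haar

section Morrey

variable {n : ℕ}

lemma ofReal_abs_haarCoeff_le (f : (Fin n → ℝ) → ℝ) (ε : Fin n → ZMod 2) (j : ℤ) (m : Fin n → ℤ) :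
    ENNReal.ofReal |haarCoeff f ε j m| ≤
      ENNReal.ofReal ((2 : ℝ) ^ ((j : ℝ) * n / 2)) * ∫⁻ y in dyadicCube n j m, ‖f y‖ₑ := by
  rw [← Real.enorm_eq_ofReal_abs, ← lintegral_const_mul' _ _ ENNReal.ofReal_ne_top,
    ← lintegral_indicator (measurableSet_dyadicCube j m)]
  refine (enorm_integral_le_lintegral_enorm _).trans (lintegral_mono fun y => ?_)
  by_cases hy : haarFn ε j m y = 0
  · simp [hy]
  rw [Set.indicator_of_mem (mem_dyadicCube_of_haarFn_ne_zero hy), enorm_mul, mul_comm,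
    Real.enorm_eq_ofReal_abs (haarFn ε j m y)]
  gcongr
  exact abs_haarFn_le ε j m y

lemma lintegral_enorm_le_morreyNorm {p q : ℝ} (hq : 1 ≤ q) {f : (Fin n → ℝ) → ℝ}
    (hf : AEStronglyMeasurable f volume) (j : ℤ) (m : Fin n → ℤ) :
    ∫⁻ y in dyadicCube n j m, ‖f y‖ₑ ≤
      volume (dyadicCube n j m) ^ (1 - 1 / p) * morreyNorm p q f := by
  have holder : ∫⁻ y in dyadicCube n j m, ‖f y‖ₑ ≤
      (∫⁻ y in dyadicCube n j m, ‖f y‖ₑ ^ q) ^ (1 / q) *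
        volume (dyadicCube n j m) ^ (1 - 1 / q) := by
    simpa [eLpNorm', Measure.restrict_apply_univ] using
      eLpNorm'_le_eLpNorm'_mul_rpow_measure_univ one_pos hq hf.restrict
  set V := volume (dyadicCube n j m)
  set I := (∫⁻ y in dyadicCube n j m, ‖f y‖ₑ ^ q) ^ (1 / q)
  have hV0 : V ≠ 0 := by simp [V, volume_dyadicCube, Real.rpow_pos_of_pos two_pos]
  have hVtop : V ≠ ⊤ := by simp [V, volume_dyadicCube]
  have morrey : V ^ (1 / p - 1 / q) * I ≤ morreyNorm p q f :=
    le_iSup₂ (f := fun j m => volume (dyadicCube n j m) ^ (1 / p - 1 / q) *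
      (∫⁻ x in dyadicCube n j m, (‖f x‖₊ : ℝ≥0∞) ^ q) ^ (1 / q)) j m
  calc ∫⁻ y in dyadicCube n j m, ‖f y‖ₑ ≤ I * V ^ (1 - 1 / q) := holder
    _ = V ^ (1 / q - 1 / p) * (V ^ (1 / p - 1 / q) * I) * V ^ (1 - 1 / q) := by
      rw [← mul_assoc, ← ENNReal.rpow_add _ _ hV0 hVtop]
      norm_num
    _ ≤ V ^ (1 / q - 1 / p) * morreyNorm p q f * V ^ (1 - 1 / q) := by gcongr
    _ = V ^ (1 - 1 / p) * morreyNorm p q f := by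
      rw [mul_right_comm, ← ENNReal.rpow_add _ _ hV0 hVtop]
      ring_nf

lemma ofReal_abs_haarLayer_le {p q : ℝ} (hq : 1 ≤ q) {f : (Fin n → ℝ) → ℝ}
    (hf : AEStronglyMeasurable f volume) (ε : Fin n → ZMod 2) (j : ℤ) (x : Fin n → ℝ) :
    ENNReal.ofReal |haarLayer f ε j x| ≤
      ENNReal.ofReal ((2 : ℝ) ^ ((j : ℝ) * n / p)) * morreyNorm p q f := by
  set m : Fin n → ℤ := fun i => ⌊(2 : ℝ) ^ j * x i⌋
  set c := ENNReal.ofReal ((2 : ℝ) ^ ((j : ℝ) * n / 2))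
  rw [haarLayer_eq, abs_mul, ENNReal.ofReal_mul (abs_nonneg _)]
  calc ENNReal.ofReal |haarCoeff f ε j m| * ENNReal.ofReal |haarFn ε j m x|
      ≤ c * (∫⁻ y in dyadicCube n j m, ‖f y‖ₑ) * c :=
        mul_le_mul' (ofReal_abs_haarCoeff_le f ε j m)
          (ENNReal.ofReal_le_ofReal (abs_haarFn_le ε j m x))
    _ ≤ c * (volume (dyadicCube n j m) ^ (1 - 1 / p) * morreyNorm p q f) * c := by
        gcongr
        exact lintegral_enorm_le_morreyNorm hq hf j m
    _ = ENNReal.ofReal ((2 : ℝ) ^ ((j : ℝ) * n / p)) * morreyNorm p q f := by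
        rw [volume_dyadicCube, ENNReal.ofReal_rpow_of_pos (by positivity), mul_comm _ c,
          ← mul_assoc, ← mul_assoc, ← ENNReal.ofReal_mul (by positivity),
          ← ENNReal.ofReal_mul (by positivity), ← Real.rpow_mul zero_le_two,
          ← Real.rpow_add two_pos, ← Real.rpow_add two_pos]
        ring_nf

lemma ofReal_abs_weightedLayer_le (hn : n ≠ 0) {p q : ℝ} (hq : 1 ≤ q) {f : (Fin n → ℝ) → ℝ}
    (hf : AEStronglyMeasurable f volume) (α : ℝ) (ε : Fin n → ZMod 2) (j : ℤ) (x : Fin n → ℝ) :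
    ENNReal.ofReal |weightedLayer α f ε j x| ≤
      ENNReal.ofReal ((2 : ℝ) ^ ((j : ℝ) * (n / p - α))) * morreyNorm p q f := by
  calc ENNReal.ofReal |weightedLayer α f ε j x|
      ≤ ENNReal.ofReal ((2 : ℝ) ^ (-(j : ℝ) * α)) *
          (ENNReal.ofReal ((2 : ℝ) ^ ((j : ℝ) * n / p)) * morreyNorm p q f) := by
        rw [ofReal_abs_weightedLayer_eq hn]
        gcongr
        exact ofReal_abs_haarLayer_le hq hf ε j x
    _ = ENNReal.ofReal ((2 : ℝ) ^ ((j : ℝ) * (n / p - α))) * morreyNorm p q f := by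
        rw [← mul_assoc, ← ENNReal.ofReal_mul (by positivity), ← Real.rpow_add two_pos]
        ring_nf

end Morrey

theorem weightedLayer_pointwise_estimate_general (n : ℕ) (hn : 0 < n) (α p q s t : ℝ)
    (hα0 : 0 < α) (hq : 1 < q) (hqp : q ≤ p)
    (ht : 1 < t) (hts : t ≤ s) (hps : 1 / s = 1 / p - α / n) :
    ∃ C : ℝ, 0 < C ∧
      ∀ (f : (Fin n → ℝ) → ℝ) (ε : Fin n → ZMod 2), MemMorrey p q f → ε ≠ 0 →
        ∀ x : Fin n → ℝ,
          ∑' j : ℤ, ENNReal.ofReal |weightedLayer α f ε j x|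
            ≤ ENNReal.ofReal C * morreyNorm p q f ^ (1 - p / s) *
                (⨆ l : ℤ, ENNReal.ofReal |haarLayer f ε l x|) ^ (p / s) := by
  have hp : 0 < p := by linarith
  have hs : 0 < s := by linarith
  have hn' : (0 : ℝ) < n := Nat.cast_pos.2 hn
  have hsum : α + n / s = n / p := by
    rw [div_eq_mul_one_div (n : ℝ) s, hps]
    field_simp
    ring
  have hexp₂ : n / s / (α + n / s) = p / s := by
    rw [hsum]
    field_simp
  have hexp₁ : α / (α + n / s) = 1 - p / s := by
    rw [← hexp₂, eq_sub_iff_add_eq, ← add_div, div_self (by positivity)]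
  refine ⟨twoSidedGeomConst α (n / s), twoSidedGeomConst_pos hα0 (by positivity),
    fun f ε hf _ x => ?_⟩
  rw [← hexp₁, ← hexp₂]
  refine tsum_le_of_two_sided_geometric_bound hα0 (by positivity) (fun j => ?_) (fun j => ?_)
  · rw [ofReal_abs_weightedLayer_eq hn.ne']
    gcongr
    exact le_iSup (fun l : ℤ => ENNReal.ofReal |haarLayer f ε l x|) j
  · rw [← add_sub_cancel_left α (n / s), hsum]
    exact ofReal_abs_weightedLayer_le hn.ne' hq.le hf.1 α ε j x

/-- pointwise estimate in the proof of Proposition 3.2: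
`Σ_j |Σ_{Q∈𝒟_j}|Q|^{α/n}⟨f,h^ε_Q⟩h^ε_Q(x)|
  ≤ C ‖f‖_{M^p_q}^{1−p/s} (sup_l |Σ_{Q∈𝒟_l}⟨f,h^ε_Q⟩h^ε_Q(x)|)^{p/s}`. -/
theorem weightedLayer_pointwise_estimate (n : ℕ) (hn : 0 < n) (α p q s t : ℝ)
    (hα0 : 0 < α) (hαn : α < n) (hq : 1 < q) (hqp : q ≤ p)
    (ht : 1 < t) (hts : t ≤ s) (hps : 1 / s = 1 / p - α / n) (hst : t / s = q / p) :
    ∃ C : ℝ, 0 < C ∧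
      ∀ (f : (Fin n → ℝ) → ℝ) (ε : Fin n → ZMod 2), MemMorrey p q f → ε ≠ 0 →
        ∀ x : Fin n → ℝ,
          ∑' j : ℤ, ENNReal.ofReal |weightedLayer α f ε j x|
            ≤ ENNReal.ofReal C * morreyNorm p q f ^ (1 - p / s) *
                (⨆ l : ℤ, ENNReal.ofReal |haarLayer f ε l x|) ^ (p / s) :=
  weightedLayer_pointwise_estimate_general n hn α p q s t hα0 hq hqp ht hts hps

end
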